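/- arXiv:1701.02104 — 3 statements merged into one kernel-verified Lean document; each statement's English description precedes it below -/
import Mathlib

section
/- Let R be a chained ring (every two ideals comparable) and I a 2-absorbing ideal of R whose radical is a prime ideal P. Then I = P or I = P², and I is P-primary. -/
/-- An ideal is 2-absorbing if whenever a product of three elements lies in it,
the product of some two of them lies in it. -/
def IsTwoAbsorbing {R : Type*} [CommRing R] (I : Ideal R) : Prop :=
  ∀ a b c : R, a * b * c ∈ I → a * b ∈ I ∨ a * c ∈ I ∨ b * c ∈ I

/-- A TAF-ring: every proper ideal is a finite product of proper 2-absorbing ideals. -/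
def IsTAFRing (R : Type*) [CommRing R] : Prop :=
  ∀ I : Ideal R, I ≠ ⊤ → ∃ (n : ℕ) (J : Fin n → Ideal R),
    (∀ i, J i ≠ ⊤ ∧ IsTwoAbsorbing (J i)) ∧ I = ∏ i, J i

/-- In a 2-absorbing proper ideal, any element with some power in the ideal has its
square in the ideal. -/
lemma sq_mem_of_pow_mem {R : Type*} [CommRing R] {I : Ideal R} (hI : I ≠ ⊤)
    (hTA : IsTwoAbsorbing I) {x : R} : ∀ n : ℕ, x ^ n ∈ I → x * x ∈ I := by
  intro n
  induction n using Nat.strong_induction_on with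
  | _ n ih =>
    intro hn
    match n with
    | 0 => exact absurd (I.eq_top_iff_one.mpr (by simpa using hn)) hI
    | 1 => exact I.mul_mem_left x (by simpa using hn)
    | (m+2) =>
      have h3 : x * x * x ^ m ∈ I := by
        rw [show x * x * x ^ m = x ^ (m+2) by ring]; exact hn
      rcases hTA x x (x ^ m) h3 with h | h | h
      · exact h
      · exact ih (m+1) (by omega) (by rw [pow_succ']; exact h)
      · exact ih (m+1) (by omega) (by rw [pow_succ']; exact h)

theorem twoAbsorbing_in_chained_ring {R : Type*} [CommRing R]
    (hch : ∀ I J : Ideal R, I ≤ J ∨ J ≤ I)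
    (I P : Ideal R) (hI : I ≠ ⊤) (hTA : IsTwoAbsorbing I)
    (hP : P.IsPrime) (hrad : I.radical = P) :
    (I = P ∨ I = P ^ 2) ∧ I.IsPrimary := by
  -- any two elements are comparable under divisibility
  have hdvd : ∀ x y : R, y ∣ x ∨ x ∣ y := by
    intro x y
    rcases hch (Ideal.span {x}) (Ideal.span {y}) with h | h
    · exact Or.inl (Ideal.mem_span_singleton.mp (h (Ideal.mem_span_singleton_self x)))
    · exact Or.inr (Ideal.mem_span_singleton.mp (h (Ideal.mem_span_singleton_self y)))
  have hsq : ∀ x : R, x ∈ P → x * x ∈ I := by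
    intro x hx
    rw [← hrad] at hx
    obtain ⟨n, hn⟩ := hx
    exact sq_mem_of_pow_mem hI hTA n hn
  have hIP : I ≤ P := hrad ▸ Ideal.le_radical
  -- I is primary
  have hprimary : I.IsPrimary := by
    rw [Ideal.isPrimary_iff]
    refine ⟨hI, ?_⟩
    intro x y hxy
    by_contra hcon
    push_neg at hcon
    obtain ⟨hxI, hyP⟩ := hcon
    rw [hrad] at hyP
    rcases hdvd x y with ⟨r, rfl⟩ | ⟨s, rfl⟩
    · -- x = y * r
      have h3 : r * y * y ∈ I := by rw [show r * y * y = y * r * y by ring]; exact hxy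
      rcases hTA r y y h3 with h | h | h
      · exact hxI (by rw [mul_comm]; exact h)
      · exact hxI (by rw [mul_comm]; exact h)
      · exact hyP (hrad ▸ ⟨2, by rw [pow_two]; exact h⟩)
    · -- y = x * s
      have hyP' : x * s ∉ P := hyP
      have h3 : s * x * x ∈ I := by rw [show s * x * x = x * (x * s) by ring]; exact hxy
      rcases hTA s x x h3 with h | h | h
      · exact hyP (hrad ▸ Ideal.le_radical (show x * s ∈ I by rw [mul_comm]; exact h))
      · exact hyP (hrad ▸ Ideal.le_radical (show x * s ∈ I by rw [mul_comm]; exact h))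
      · -- x * x ∈ I, so x ∈ P
        have hxP : x ∈ P := hrad ▸ ⟨2, by rw [pow_two]; exact h⟩
        have hsP : s ∉ P := fun hs => hyP' (P.mul_mem_left x hs)
        rcases hdvd s x with ⟨v, hv⟩ | ⟨w, hw⟩
        · -- s = x * v : y = x * x * v ∈ I ⊆ P
          apply hyP'
          apply hIP
          rw [hv, show x * (x * v) = x * x * v by ring]
          exact I.mul_mem_right v h
        · -- x = s * w : w ∈ P since x ∈ P, s ∉ P; then y = x * s = s * w * s ∈ P
          have hwP : w ∈ P := by
            rcases hP.mem_or_mem (show s * w ∈ P from hw ▸ hxP) with h' | h'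
            · exact absurd h' hsP
            · exact h'
          apply hyP'
          rw [hw, show s * w * s = s * s * w by ring]
          exact P.mul_mem_left (s * s) hwP
  -- P ^ 2 ≤ I
  have hP2 : P ^ 2 ≤ I := by
    rw [pow_two, Ideal.mul_le]
    intro a ha b hb
    rcases hdvd a b with ⟨r, hr⟩ | ⟨r, hr⟩
    · rw [hr, show b * r * b = r * (b * b) by ring]
      exact I.mul_mem_left r (hsq b hb)
    · rw [hr, show a * (a * r) = r * (a * a) by ring]
      exact I.mul_mem_left r (hsq a ha)
  refine ⟨?_, hprimary⟩
  by_cases hIPeq : I = P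
  · exact Or.inl hIPeq
  · right
    have : ∃ p ∈ P, p ∉ I := by
      by_contra hc
      push_neg at hc
      exact hIPeq (le_antisymm hIP hc)
    obtain ⟨p, hpP, hpI⟩ := this
    refine le_antisymm ?_ hP2
    intro x hx
    rcases hdvd x p with ⟨r, hr⟩ | ⟨r, hr⟩
    · -- x = p * r
      rcases (Ideal.isPrimary_iff.mp hprimary).2 (hr ▸ hx) with h | h
      · exact absurd h hpI
      · rw [hrad] at h
        rw [hr, pow_two]
        exact Ideal.mul_mem_mul hpP h
    · -- p = x * r ∈ I, contradiction
      exact absurd (hr ▸ I.mul_mem_right r hx) hpI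
end

section
/- A one-dimensional TAF-ring with a unique height-zero prime ideal is an integral domain. -/
/-!
Localizing at a maximal ideal reduces the theorem to a local TAF-ring whose only primes are
`Q ⊊ M`, where we show `Q = 0`. Each 2-absorbing ideal contains the square of its radical, so
`Q`, the nilradical, is nilpotent and it suffices to show `Q = Q²`. Given `x ∈ Q`, pass to the
quotient by `Q² + xM`, so that `Q² = 0` and `Mx = 0`. An ideal `I ⊄ Q` has 2-absorbing factors
containing `M²`, so `M ^ (2n) ≤ I ≤ M ^ n`; hence the powers of `M` strictly decrease, some
`m ∈ M \ Q` has `M² ≤ (m)`, and `x` lies in every power of `M`. Exactly one factor `J₀` of `(x)`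
lies in `Q`; writing `x = v m^k` and absorbing the powers of `m` into `J₀` gives `x ∈ x M = 0`.
-/

namespace IsTwoAbsorbing

variable {R : Type*} [CommRing R] {J : Ideal R}

theorem mul_self_mem_of_pow_mem (hJ : IsTwoAbsorbing J) {a : R} :
    ∀ {n : ℕ}, a ^ n ∈ J → a * a ∈ J
  | 0, h => by simp [(Ideal.eq_top_iff_one J).2 (by simpa using h)]
  | 1, h => J.mul_mem_left a (by simpa using h)
  | n + 2, h => by
    rw [pow_succ', pow_succ', ← mul_assoc] at h
    rcases hJ a a (a ^ n) h with h | h | h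
    · exact h
    all_goals exact hJ.mul_self_mem_of_pow_mem (n := n + 1) (by rwa [pow_succ'])

theorem mul_mem_of_mem_radical (hJ : IsTwoAbsorbing J) {a b : R} (ha : a ∈ J.radical)
    (hb : b ∈ J.radical) : a * b ∈ J := by
  have ha2 := hJ.mul_self_mem_of_pow_mem ha.choose_spec
  have hb2 := hJ.mul_self_mem_of_pow_mem hb.choose_spec
  have habs : a * b * (a + b) ∈ J := by
    rw [show a * b * (a + b) = a * a * b + b * b * a by ring]
    exact J.add_mem (J.mul_mem_right _ ha2) (J.mul_mem_right _ hb2)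
  rcases hJ a b (a + b) habs with h | h | h
  · exact h
  · rw [show a * b = a * (a + b) - a * a by ring]
    exact J.sub_mem h ha2
  · rw [show a * b = b * (a + b) - b * b by ring]
    exact J.sub_mem h hb2

theorem radical_sq_le (hJ : IsTwoAbsorbing J) : J.radical ^ 2 ≤ J := by
  rw [sq, Ideal.mul_le]
  exact fun a ha b hb => hJ.mul_mem_of_mem_radical ha hb

theorem mul_mem_of_pow_mul_mem (hJ : IsTwoAbsorbing J) {m v : R} (hm : m ∉ J.radical) :
    ∀ {k : ℕ}, m ^ k * v ∈ J → m * v ∈ J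
  | 0, h => J.mul_mem_left m (by simpa using h)
  | k + 1, h => by
    rw [pow_succ'] at h
    rcases hJ m (m ^ k) v h with h | h | h
    · exact absurd ⟨k + 1, by rwa [pow_succ']⟩ hm
    · exact h
    · exact hJ.mul_mem_of_pow_mul_mem hm h

theorem map_of_surjective {S : Type*} [CommRing S] {f : R →+* S} (hf : Function.Surjective f)
    (hJ : IsTwoAbsorbing J) (hker : RingHom.ker f ≤ J) : IsTwoAbsorbing (J.map f) := by
  have hmem : ∀ r, f r ∈ J.map f ↔ r ∈ J := fun r => by
    rw [← Ideal.mem_comap, Ideal.comap_map_of_surjective' f hf, sup_eq_left.2 hker]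
  intro a b c habc
  obtain ⟨a, rfl⟩ := hf a
  obtain ⟨b, rfl⟩ := hf b
  obtain ⟨c, rfl⟩ := hf c
  simp only [← map_mul, hmem] at habc ⊢
  exact hJ a b c habc

theorem map_algebraMap {S : Type*} [CommRing S] [Algebra R S] (M : Submonoid R)
    [IsLocalization M S] (hJ : IsTwoAbsorbing J) :
    IsTwoAbsorbing (J.map (algebraMap R S)) := by
  intro a b c habc
  obtain ⟨⟨a, s⟩, rfl⟩ := IsLocalization.mk'_surjective M a
  obtain ⟨⟨b, s'⟩, rfl⟩ := IsLocalization.mk'_surjective M b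
  obtain ⟨⟨c, s''⟩, rfl⟩ := IsLocalization.mk'_surjective M c
  simp only [← IsLocalization.mk'_mul, IsLocalization.mk'_mem_map_algebraMap_iff] at habc ⊢
  obtain ⟨t, ht, habc⟩ := habc
  rcases hJ (t * a) b c (by simpa only [mul_assoc] using habc) with h | h | h
  · exact .inl ⟨t, ht, by rwa [mul_assoc] at h⟩
  · exact .inr (.inl ⟨t, ht, by rwa [mul_assoc] at h⟩)
  · exact .inr (.inr ⟨t, ht, J.mul_mem_left t h⟩)

end IsTwoAbsorbing

theorem Ideal.multiset_prod_le_of_mem {R : Type*} [CommRing R] {s : Multiset (Ideal R)}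
    {J : Ideal R} (hJ : J ∈ s) : s.prod ≤ J :=
  Ideal.multiset_prod_le_inf.trans (Multiset.inf_le hJ)

section TAF

variable {R S : Type*} [CommRing R] [CommRing S]

theorem isTAFRing_iff_multiset : IsTAFRing R ↔ ∀ I : Ideal R, I ≠ ⊤ →
    ∃ s : Multiset (Ideal R), (∀ J ∈ s, J ≠ ⊤ ∧ IsTwoAbsorbing J) ∧ I = s.prod := by
  refine forall₂_congr fun I _ => ⟨?_, ?_⟩
  · rintro ⟨n, J, hJ, rfl⟩
    exact ⟨Finset.univ.val.map J, by simpa using fun i => hJ i, rfl⟩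
  · rintro ⟨s, hs, rfl⟩
    exact ⟨s.toList.length, fun i => s.toList[i],
      fun i => hs _ (Multiset.mem_toList.1 (List.getElem_mem _)),
      ((Fin.prod_univ_getElem s.toList).trans (Multiset.prod_toList s)).symm⟩

theorem IsTAFRing.exists_radical_pow_le (h : IsTAFRing R) (I : Ideal R) :
    ∃ n, I.radical ^ n ≤ I := by
  rcases eq_or_ne I ⊤ with rfl | hI
  · exact ⟨0, le_top⟩
  obtain ⟨s, hs, rfl⟩ := isTAFRing_iff_multiset.1 h I hI
  refine ⟨2 * Multiset.card s, ?_⟩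
  rw [pow_mul]
  refine Multiset.pow_card_le_prod fun J hJ => ?_
  exact (Ideal.pow_right_mono (Ideal.radical_mono (Ideal.multiset_prod_le_of_mem hJ)) 2).trans
    (hs J hJ).2.radical_sq_le

theorem IsTAFRing.of_map (h : IsTAFRing R) (f : R →+* S)
    (hf : ∀ I : Ideal S, (I.comap f).map f = I)
    (hf_twoAbs : ∀ J : Ideal R, RingHom.ker f ≤ J → IsTwoAbsorbing J →
      IsTwoAbsorbing (J.map f)) :
    IsTAFRing S := by
  classical
  rw [isTAFRing_iff_multiset] at h ⊢
  intro I hI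
  obtain ⟨s, hs, hsI⟩ := h (I.comap f) fun e => hI (by rw [← hf I, e, Ideal.map_top])
  refine ⟨(s.map (Ideal.map f)).filter (· ≠ ⊤), ?_, ?_⟩
  · simp only [Multiset.mem_filter, Multiset.mem_map]
    rintro _ ⟨⟨J, hJ, rfl⟩, hJtop⟩
    refine ⟨hJtop, hf_twoAbs J ?_ (hs J hJ).2⟩
    calc RingHom.ker f ≤ I.comap f := Ideal.comap_mono bot_le
      _ ≤ J := hsI ▸ Ideal.multiset_prod_le_of_mem hJ
  · have hprod : (s.map (Ideal.map f)).prod = I := by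
      rw [← hf I, hsI]
      exact (map_multiset_prod (Ideal.mapHom f) s).symm
    have htop : ((s.map (Ideal.map f)).filter (¬ · ≠ ⊤)).prod = 1 :=
      Multiset.prod_eq_one fun J hJ => by simpa using (Multiset.mem_filter.1 hJ).2
    rw [← hprod, ← Multiset.prod_filter_mul_prod_filter_not (s := s.map (Ideal.map f)) (· ≠ ⊤),
      htop, mul_one]

theorem IsTAFRing.of_surjective (h : IsTAFRing R) (f : R →+* S) (hf : Function.Surjective f) :
    IsTAFRing S :=
  h.of_map f (Ideal.map_comap_of_surjective f hf) fun _ hker hJ => hJ.map_of_surjective hf hker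

theorem IsTAFRing.localization [Algebra R S] (M : Submonoid R) [IsLocalization M S]
    (h : IsTAFRing R) : IsTAFRing S :=
  h.of_map (algebraMap R S) (IsLocalization.map_under M S) fun _ _ hJ => hJ.map_algebraMap M

end TAF

structure SpecEqPair {R : Type*} [CommRing R] (Q M : Ideal R) : Prop where
  lt : Q < M
  isPrime_iff : ∀ p : Ideal R, p.IsPrime ↔ p = Q ∨ p = M

namespace SpecEqPair

open Ideal

variable {T : Type*} [CommRing T] {Q M : Ideal T}

theorem isPrime_left (hs : SpecEqPair Q M) : Q.IsPrime := (hs.isPrime_iff Q).2 (.inl rfl)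

theorem ne_top (hs : SpecEqPair Q M) : M ≠ ⊤ := ((hs.isPrime_iff M).2 (.inr rfl)).ne_top

theorem ne_top_of_le (hs : SpecEqPair Q M) {I : Ideal T} (hI : I ≤ M) : I ≠ ⊤ :=
  fun e => hs.ne_top (top_le_iff.1 (e ▸ hI))

theorem le_right_of_ne_top (hs : SpecEqPair Q M) {I : Ideal T} (hI : I ≠ ⊤) : I ≤ M := by
  obtain ⟨m, hm, hIm⟩ := exists_le_maximal I hI
  rcases (hs.isPrime_iff m).1 hm.isPrime with rfl | rfl
  · exact absurd (hm.eq_of_le hs.ne_top hs.lt.le) hs.lt.ne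
  · exact hIm

theorem isUnit_one_sub (hs : SpecEqPair Q M) {t : T} (ht : t ∈ M) : IsUnit (1 - t) := by
  by_contra hu
  have h1 : 1 - t ∈ M :=
    hs.le_right_of_ne_top (span_singleton_eq_top.not.2 hu) (mem_span_singleton_self _)
  exact hs.ne_top ((eq_top_iff_one M).2 (by simpa using M.add_mem h1 ht))

theorem le_radical_of_not_le_left (hs : SpecEqPair Q M) {I : Ideal T} (hI : ¬I ≤ Q) :
    M ≤ I.radical := by
  rw [radical_eq_sInf]
  refine le_sInf fun p ⟨hIp, hp⟩ => ?_
  rcases (hs.isPrime_iff p).1 hp with rfl | rfl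
  · exact absurd hIp hI
  · exact le_rfl

theorem sq_le_of_isTwoAbsorbing (hs : SpecEqPair Q M) {J : Ideal T} (hJ : IsTwoAbsorbing J)
    (hJQ : ¬J ≤ Q) : M ^ 2 ≤ J :=
  (pow_right_mono (hs.le_radical_of_not_le_left hJQ) 2).trans hJ.radical_sq_le

theorem pow_two_mul_card_le_prod (hs : SpecEqPair Q M) {s : Multiset (Ideal T)}
    (h : ∀ J ∈ s, IsTwoAbsorbing J ∧ ¬J ≤ Q) : M ^ (2 * Multiset.card s) ≤ s.prod := by
  rw [pow_mul]
  exact Multiset.pow_card_le_prod fun J hJ => hs.sq_le_of_isTwoAbsorbing (h J hJ).1 (h J hJ).2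

theorem prod_le_pow_card (hs : SpecEqPair Q M) {s : Multiset (Ideal T)} (h : ∀ J ∈ s, J ≠ ⊤) :
    s.prod ≤ M ^ Multiset.card s :=
  Multiset.prod_le_pow_card s M fun J hJ => hs.le_right_of_ne_top (h J hJ)

theorem quotient (hs : SpecEqPair Q M) {K : Ideal T} (hK : K ≤ Q) :
    SpecEqPair (Q.map (Ideal.Quotient.mk K)) (M.map (Ideal.Quotient.mk K)) := by
  have hsurj := Ideal.Quotient.mk_surjective (I := K)
  have hcomap : ∀ I, K ≤ I → (I.map (Ideal.Quotient.mk K)).comap (Ideal.Quotient.mk K) = I :=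
    fun I hI => by
      rw [comap_map_of_surjective' _ hsurj, mk_ker, sup_eq_left.2 hI]
  have hQ := hs.isPrime_left
  have hM := (hs.isPrime_iff M).2 (.inr rfl)
  refine ⟨lt_of_le_of_ne (map_mono hs.lt.le) fun e => hs.lt.ne ?_, fun p => ⟨fun hp => ?_, ?_⟩⟩
  · rw [← hcomap Q hK, e, hcomap M (hK.trans hs.lt.le)]
  · rcases (hs.isPrime_iff _).1 (comap_isPrime (Ideal.Quotient.mk K) p) with e | e
    · exact .inl (by rw [← e, map_comap_of_surjective _ hsurj])
    · exact .inr (by rw [← e, map_comap_of_surjective _ hsurj])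
  · rintro (rfl | rfl)
    · exact map_isPrime_of_surjective hsurj (by rwa [mk_ker])
    · exact map_isPrime_of_surjective hsurj (by rw [mk_ker]; exact hK.trans hs.lt.le)

theorem localization {R : Type*} [CommRing R] {P M : Ideal R} [P.IsPrime] [M.IsPrime]
    (hPM : P < M) (h : ∀ p : Ideal R, p.IsPrime → p ≤ M → p = P ∨ p = M) :
    SpecEqPair (P.map (algebraMap R (Localization.AtPrime M)))
      (IsLocalRing.maximalIdeal (Localization.AtPrime M)) := by
  have hdisj : Disjoint (M.primeCompl : Set R) P :=
    Set.disjoint_left.2 fun _ ha hP => ha (hPM.le hP)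
  have hPmap := IsLocalization.isPrime_of_isPrime_disjoint M.primeCompl
    (Localization.AtPrime M) P ‹_› hdisj
  refine ⟨lt_of_le_of_ne (IsLocalRing.le_maximalIdeal hPmap.ne_top) fun e => hPM.ne ?_,
    fun p => ⟨fun hp => ?_, ?_⟩⟩
  · rw [← IsLocalization.under_map_of_isPrime_disjoint M.primeCompl (Localization.AtPrime M)
      ‹_› hdisj, e, Localization.AtPrime.under_maximalIdeal]
  · obtain ⟨hq, hqM⟩ := (IsLocalization.isPrime_iff_isPrime_disjoint M.primeCompl _ p).1 hp
    rcases h _ hq (fun a ha => by_contra fun haM => Set.disjoint_left.1 hqM haM ha) with e | e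
    · exact .inl (by rw [← e, IsLocalization.map_under M.primeCompl])
    · exact .inr (Localization.AtPrime.eq_maximalIdeal_iff_under_eq.1 e)
  · rintro (rfl | rfl)
    · exact hPmap
    · exact inferInstance

end SpecEqPair

namespace IsTAFRing

open Ideal

variable {T : Type*} [CommRing T] {Q M : Ideal T}

theorem exists_pow_le_le_pow (h : IsTAFRing T) (hs : SpecEqPair Q M) {I : Ideal T}
    (hI : I ≠ ⊤) (hIQ : ¬I ≤ Q) : ∃ n, M ^ (2 * n) ≤ I ∧ I ≤ M ^ n := by
  obtain ⟨s, hJ, rfl⟩ := isTAFRing_iff_multiset.1 h I hI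
  refine ⟨_, hs.pow_two_mul_card_le_prod fun J hJs => ⟨(hJ J hJs).2, fun hJQ => ?_⟩,
    hs.prod_le_pow_card fun J hJs => (hJ J hJs).1⟩
  exact hIQ ((multiset_prod_le_of_mem hJs).trans hJQ)

theorem strictAnti_pow (h : IsTAFRing T) (hs : SpecEqPair Q M) :
    StrictAnti (M ^ · : ℕ → Ideal T) := by
  have := hs.isPrime_left
  refine strictAnti_nat_of_succ_lt fun n =>
    lt_of_le_not_ge (pow_le_pow_right n.le_succ) fun hle => ?_
  rcases n with _ | n
  · exact hs.ne_top (top_le_iff.1 (by simpa using hle))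
  have hstab : ∀ k, M ^ (n + 1) ≤ M ^ (n + 1 + k) := by
    intro k
    induction k with
    | zero => rfl
    | succ k ih =>
      calc M ^ (n + 1) ≤ M ^ (n + 1) * M := (pow_succ M (n + 1)) ▸ hle
        _ ≤ M ^ (n + 1 + k) * M := mul_mono_left ih
        _ = M ^ (n + 1 + (k + 1)) := (pow_succ M _).symm
  -- once the powers stabilise at `M ^ (n + 1)`, some `y ∉ Q` there satisfies `(y) = M (y)`
  obtain ⟨y, hyM, hyQ⟩ := SetLike.not_le_iff_exists.1 fun hQ =>
    hs.lt.not_ge (IsPrime.le_of_pow_le hQ)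
  have hyspan : span {y} ≠ ⊤ :=
    hs.ne_top_of_le ((span_singleton_le_iff_mem M).2 (pow_le_self n.succ_ne_zero hyM))
  obtain ⟨k, hk, -⟩ := h.exists_pow_le_le_pow hs hyspan
    fun hle' => hyQ (hle' (mem_span_singleton_self y))
  have hMy : M ^ (n + 1) ≤ span {y} :=
    (hstab (2 * k)).trans ((pow_le_pow_right (by omega)).trans hk)
  have hyMy : y ∈ M * span {y} := mul_mono_right hMy (by rw [← pow_succ']; exact hle hyM)
  obtain ⟨t, ht, hty⟩ := mem_mul_span_singleton.1 hyMy
  have hy0 : (1 - t) * y = 0 := by rw [sub_mul, one_mul, hty, sub_self]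
  exact hyQ ((hs.isUnit_one_sub ht).mul_right_eq_zero.1 hy0 ▸ Q.zero_mem)

theorem exists_mem_sq_le_span (h : IsTAFRing T) (hs : SpecEqPair Q M) :
    ∃ m ∈ M, m ∉ Q ∧ M ^ 2 ≤ span {m} := by
  have hMM : ¬M ≤ M ^ 2 := fun hle =>
    (h.strictAnti_pow hs one_lt_two).not_ge (by simpa using hle)
  obtain ⟨m, hmM, hm⟩ := Set.not_subset.1 fun hsub =>
    (subset_union.1 hsub).elim hs.lt.not_ge hMM
  rw [Set.mem_union, not_or] at hm
  have hmspan : span {m} ≠ ⊤ := hs.ne_top_of_le ((span_singleton_le_iff_mem M).2 hmM)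
  obtain ⟨n, hlow, hup⟩ := h.exists_pow_le_le_pow hs hmspan
    fun hle => hm.1 (hle (mem_span_singleton_self m))
  refine ⟨m, hmM, hm.1, ?_⟩
  obtain rfl : n = 1 := by
    rcases n with _ | _ | n
    · exact absurd (top_le_iff.1 (by simpa using hlow)) hmspan
    · rfl
    · exact absurd (pow_le_pow_right (by omega) (hup (mem_span_singleton_self m))) hm.2
  simpa using hlow

theorem mem_pow_of_span_mul_eq_bot (h : IsTAFRing T) (hs : SpecEqPair Q M) {x : T}
    (hx : x ∈ M) (hxM : span {x} * M = ⊥) (j : ℕ) : x ∈ M ^ j := by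
  have := hs.isPrime_left
  set I := span {x} ⊔ M ^ (2 * j + 1)
  have hIM : I ≤ M := sup_le ((span_singleton_le_iff_mem M).2 hx) (pow_le_self (by omega))
  have hIQ : ¬I ≤ Q := fun hle =>
    hs.lt.not_ge (IsPrime.le_of_pow_le (le_sup_right.trans hle))
  obtain ⟨n, hlow, hup⟩ := h.exists_pow_le_le_pow hs (hs.ne_top_of_le hIM) hIQ
  have hIM' : I * M = M ^ (2 * j + 2) := by rw [Ideal.sup_mul, hxM, bot_sup_eq, ← pow_succ]
  have hle : M ^ (2 * n + 1) ≤ M ^ (2 * j + 2) := by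
    rw [pow_succ, ← hIM']
    exact mul_mono_left hlow
  have hjn : j ≤ n := by
    have := (h.strictAnti_pow hs).le_iff_ge.1 hle
    omega
  exact pow_le_pow_right hjn (hup (le_sup_left (a := span {x}) (mem_span_singleton_self x)))

theorem eq_zero_of_mem_of_sq_eq_bot (h : IsTAFRing T) (hs : SpecEqPair Q M) {x : T}
    (hx : x ∈ Q) (hQ2 : Q ^ 2 = ⊥) (hxM : span {x} * M = ⊥) : x = 0 := by
  classical
  have hQ := hs.isPrime_left
  by_contra hx0
  have hxQ : span {x} ≤ Q := (span_singleton_le_iff_mem Q).2 hx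
  obtain ⟨s, hsJ, hsx⟩ := isTAFRing_iff_multiset.1 h _ (hs.ne_top_of_le (hxQ.trans hs.lt.le))
  obtain ⟨J₀, hJ₀s, hJ₀Q⟩ := hQ.multiset_prod_le.1 (hsx ▸ hxQ)
  have hprod : span {x} = J₀ * (s.erase J₀).prod := by rw [Multiset.prod_erase hJ₀s, hsx]
  -- a second factor inside `Q` would put `x` in `Q ^ 2 = ⊥`
  have hrest : ∀ J ∈ s.erase J₀, IsTwoAbsorbing J ∧ ¬J ≤ Q := fun J hJ =>
    ⟨(hsJ J (Multiset.mem_of_mem_erase hJ)).2, fun hJQ => hx0 <| by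
      have hxQ2 : span {x} ≤ Q ^ 2 :=
        hprod ▸ sq Q ▸ mul_mono hJ₀Q ((multiset_prod_le_of_mem hJ).trans hJQ)
      simpa [hQ2] using hxQ2 (mem_span_singleton_self x)⟩
  set N := Multiset.card (s.erase J₀)
  obtain ⟨m, hmM, hmQ, hm⟩ := h.exists_mem_sq_le_span hs
  obtain ⟨v, hv⟩ : ∃ v, v * m ^ (2 * N + 2) = x := by
    rw [← mem_span_singleton', ← span_singleton_pow]
    refine pow_right_mono hm _ ?_
    rw [← pow_mul]
    exact h.mem_pow_of_span_mul_eq_bot hs (hs.lt.le hx) hxM _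
  have hxJ₀ : x ∈ J₀ := multiset_prod_le_of_mem hJ₀s (hsx ▸ mem_span_singleton_self x)
  have hmv : m * v ∈ J₀ := (hsJ J₀ hJ₀s).2.mul_mem_of_pow_mul_mem
    (fun hmrad => hmQ (hQ.radical_le_iff.2 hJ₀Q hmrad)) (by rwa [mul_comm, hv])
  have hmvx : m * v * m ^ (2 * N) ∈ span {x} := hprod ▸
    mul_mono_right (hs.pow_two_mul_card_le_prod hrest) (mul_mem_mul hmv (pow_mem_pow hmM _))
  obtain ⟨r, hr⟩ := mem_span_singleton'.1 hmvx
  have hmx : m * x = 0 := by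
    have : x * m ∈ span {x} * M := mul_mem_mul (mem_span_singleton_self x) hmM
    rwa [hxM, mem_bot, mul_comm] at this
  apply hx0
  calc x = v * m ^ (2 * N + 2) := hv.symm
    _ = m * v * m ^ (2 * N) * m := by ring
    _ = r * (m * x) := by rw [← hr]; ring
    _ = 0 := by rw [hmx, mul_zero]

theorem le_sq_of_specEqPair (h : IsTAFRing T) (hs : SpecEqPair Q M) : Q ≤ Q ^ 2 := by
  intro x hx
  set K := Q ^ 2 ⊔ span {x} * M
  have hKQ : K ≤ Q := sup_le (pow_le_self two_ne_zero)
    (Ideal.mul_le_left.trans ((span_singleton_le_iff_mem Q).2 hx))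
  have hK : K.map (Ideal.Quotient.mk K) = ⊥ := map_quotient_self K
  have hx0 : Ideal.Quotient.mk K x = 0 := by
    refine (h.of_surjective _ Ideal.Quotient.mk_surjective).eq_zero_of_mem_of_sq_eq_bot
      (hs.quotient hKQ) (mem_map_of_mem _ hx) ?_ ?_
    · rw [← Ideal.map_pow, ← le_bot_iff, ← hK]
      exact map_mono le_sup_left
    · rw [← Set.image_singleton, ← map_span, ← Ideal.map_mul, ← le_bot_iff, ← hK]
      exact map_mono le_sup_right
  obtain ⟨q, hq, y, hy, hxy⟩ := Submodule.mem_sup.1 (Ideal.Quotient.eq_zero_iff_mem.1 hx0)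
  obtain ⟨t, ht, rfl⟩ := mem_span_singleton_mul.1 hy
  have hqx : (1 - t) * x = q := by linear_combination -hxy
  rwa [← unit_mul_mem_iff_mem _ (hs.isUnit_one_sub ht), hqx]

theorem eq_bot_of_specEqPair (h : IsTAFRing T) (hs : SpecEqPair Q M) : Q = ⊥ := by
  obtain ⟨n, hn⟩ := h.exists_radical_pow_le ⊥
  have hQrad : Q ≤ (⊥ : Ideal T).radical := by
    rw [radical_eq_sInf]
    refine le_sInf fun p ⟨_, hp⟩ => ?_
    rcases (hs.isPrime_iff p).1 hp with rfl | rfl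
    exacts [le_rfl, hs.lt.le]
  have hidem : IsIdempotentElem Q :=
    le_antisymm Ideal.mul_le_right (sq Q ▸ h.le_sq_of_specEqPair hs)
  rw [← le_bot_iff, ← hidem.pow_succ_eq n]
  exact (pow_le_pow_right n.le_succ).trans ((pow_right_mono hQrad n).trans hn)

end IsTAFRing

theorem TAF_one_dim_unique_min_prime_is_domain {R : Type*} [CommRing R]
    (h : IsTAFRing R) (hdim : ringKrullDim R = 1)
    (huniq : ∃! P : Ideal R, P ∈ minimalPrimes R) : IsDomain R := by
  obtain ⟨P, hPmin, hPuniq⟩ := huniq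
  have hP : P.IsPrime := hPmin.1.1
  have hPle : ∀ p : Ideal R, p.IsPrime → P ≤ p := fun p _ => by
    obtain ⟨q, hq, hqp⟩ := Ideal.exists_minimalPrimes_le (bot_le : ⊥ ≤ p)
    exact hPuniq q hq ▸ hqp
  have hprimes : ∀ p : Ideal R, p.IsPrime → p = P ∨ p.IsMaximal := fun p hp =>
    (Ring.krullDimLE_one_iff.1 (Ring.krullDimLE_iff.2 hdim.le) p hp).imp_left (hPuniq p)
  have hPmax : ¬P.IsMaximal := fun hmax => by
    have h0 := Ring.krullDimLE_iff.1
      (Ring.KrullDimLE.mk₀ fun p hp => (hprimes p hp).elim (· ▸ hmax) id)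
    rw [hdim] at h0
    exact absurd h0 (by decide)
  have hPbot : P = ⊥ := ideal_eq_bot_of_localization' P fun M hM =>
    (h.localization M.primeCompl).eq_bot_of_specEqPair <|
      SpecEqPair.localization (lt_of_le_of_ne (hPle M hM.isPrime) fun e => hPmax (e ▸ hM))
        fun p hp hpM => (hprimes p hp).imp_right fun hpmax => hpmax.eq_of_le hM.ne_top hpM
  have : (⊥ : Ideal R).IsPrime := hPbot ▸ hP
  exact IsDomain.of_bot_isPrime R
end

section
/- Let K ⊆ L be a field extension. Then the ring D = K + X·L[X] (polynomials over L with constant term in K) is a TAF-domain. -/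
/-!
Let `I` be a nonzero proper ideal of `D = K + X L[X]` and `h` a generator of its extension
`I L[X]`. If an irreducible `p` with `p(0) = 1` divides `h`, then `p ∈ D`, divisibility by `p` in
`D` and in `L[X]` agree, so `(p)` is a prime of `D` and `I = (p) (I : p)`, where `(I : p)` contains
an element of smaller degree. Otherwise `h = X ^ m` up to a unit, so `X ^ (m + 1) L[X] ⊆ I` and
`I = {X ^ m g : g(0) ∈ A}` for a `K`-subspace `A` of `L`, with `m ≥ 1` since `I` is proper. Such
an ideal is `(X K + X² L[X]) ^ (m - 1) (X A + X² L[X])`, and each `X A + X² L[X]` is 2-absorbing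
because a nonzero constant term of an element of `D` lies in `Kˣ`, which acts on `A`.
-/

open Polynomial

section TwoAbsorbing

variable {R : Type*} [CommRing R]

theorem Ideal.IsPrime.isTwoAbsorbing {P : Ideal R} (hP : P.IsPrime) : IsTwoAbsorbing P := by
  intro a b c h
  rcases hP.mem_or_mem h with hab | hc
  · exact Or.inl hab
  · exact Or.inr (Or.inr (P.mul_mem_left b hc))

variable (R) in
def twoAbsorbingProducts : Submonoid (Ideal R) :=
  Submonoid.closure {J | J ≠ ⊤ ∧ IsTwoAbsorbing J}

theorem isTAFRing_of_forall_mem_twoAbsorbingProducts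
    (h : ∀ I : Ideal R, I ∈ twoAbsorbingProducts R) : IsTAFRing R := by
  intro I _
  obtain ⟨l, hl, rfl⟩ := Submonoid.exists_list_of_mem_closure (h I)
  exact ⟨l.length, l.get, fun i => hl _ (l.get_mem i),
    by rw [← List.prod_ofFn, List.ofFn_get]⟩

theorem Ideal.eq_span_singleton_mul_colon {I : Ideal R} {x : R} (h : I ≤ Ideal.span {x}) :
    I = Ideal.span {x} * I.colon (Ideal.span {x}) := by
  refine (Ideal.eq_span_singleton_mul _ _).mpr ⟨fun z hz => ?_, fun z hz => ?_⟩
  · obtain ⟨y, rfl⟩ := Ideal.mem_span_singleton.mp (h hz)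
    exact ⟨y, Ideal.mem_colon_span_singleton.mpr (by rwa [mul_comm]), rfl⟩
  · rw [mul_comm]
    exact Ideal.mem_colon_span_singleton.mp hz

end TwoAbsorbing

theorem Polynomial.exists_irreducible_dvd_or_associated_X_pow {L : Type*} [Field L] {h : L[X]}
    (hh : h ≠ 0) : (∃ p : L[X], Irreducible p ∧ p.coeff 0 = 1 ∧ p ∣ h) ∨
      ∃ m : ℕ, Associated h (X ^ m) := by
  obtain ⟨g, hg, hXg⟩ := exists_eq_pow_rootMultiplicity_mul_and_not_dvd h hh 0
  rw [map_zero, sub_zero] at hg hXg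
  by_cases hg_unit : IsUnit g
  · exact Or.inr ⟨_, hg ▸ associated_mul_unit_left _ _ hg_unit⟩
  obtain ⟨q, hq, hqg⟩ :=
    WfDvdMonoid.exists_irreducible_factor hg_unit (by rintro rfl; simp at hXg)
  have hq0 : q.coeff 0 ≠ 0 := fun h0 => hXg ((X_dvd_iff.mpr h0).trans hqg)
  have hunit : IsUnit (C (q.coeff 0)⁻¹) := isUnit_C.mpr (inv_ne_zero hq0).isUnit
  refine Or.inl ⟨C (q.coeff 0)⁻¹ * q, (irreducible_isUnit_mul hunit).mpr hq,
    by rw [coeff_C_mul, inv_mul_cancel₀ hq0], ?_⟩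
  exact hunit.mul_left_dvd.mpr (hqg.trans (hg ▸ dvd_mul_left g _))

noncomputable abbrev kPlusXL (K L : Type*) [Field K] [Field L] [Algebra K L] : Subring L[X] :=
  Subring.comap (constantCoeff : L[X] →+* L) (algebraMap K L).range

namespace kPlusXL

variable {K L : Type*} [Field K] [Field L] [Algebra K L]

local notation "D" => kPlusXL K L

theorem mem_iff {f : L[X]} : f ∈ D ↔ ∃ k : K, algebraMap K L k = f.coeff 0 := Iff.rfl

theorem X_mul_mem (g : L[X]) : X * g ∈ D := mem_iff.mpr ⟨0, by simp⟩

theorem isUnit_of_coe_eq_C {f : D} {a : L} (hf : (f : L[X]) = C a) (ha : a ≠ 0) : IsUnit f := by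
  obtain ⟨k, hk⟩ := mem_iff.mp f.2
  rw [hf, coeff_C_zero] at hk
  have hk0 : k ≠ 0 := by rintro rfl; exact ha (by simpa using hk.symm)
  refine IsUnit.of_mul_eq_one ⟨C (algebraMap K L k⁻¹), mem_iff.mpr ⟨k⁻¹, by simp⟩⟩
    (Subtype.ext ?_)
  simp only [Subring.coe_mul, Subring.coe_one, hf, ← hk, ← map_mul,
    mul_inv_cancel₀ hk0, map_one]

theorem dvd_iff_coe_dvd {P f : D} (hP : (P : L[X]).coeff 0 = 1) :
    P ∣ f ↔ (P : L[X]) ∣ f := by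
  refine ⟨map_dvd (kPlusXL K L).subtype, fun ⟨g, hg⟩ => ?_⟩
  have hgD : g ∈ D := by
    obtain ⟨k, hk⟩ := mem_iff.mp f.2
    exact mem_iff.mpr ⟨k, by rw [hk, hg, mul_coeff_zero, hP, one_mul]⟩
  exact ⟨⟨g, hgD⟩, Subtype.ext hg⟩

theorem isPrime_span_singleton {P : D} (hP : (P : L[X]).coeff 0 = 1)
    (hirr : Irreducible (P : L[X])) : (Ideal.span {P}).IsPrime := by
  have : (Ideal.span {(P : L[X])}).IsPrime :=
    (Ideal.span_singleton_prime hirr.ne_zero).mpr hirr.prime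
  have heq : Ideal.span {P} = (Ideal.span {(P : L[X])}).comap (kPlusXL K L).subtype := by
    ext f
    simp only [Ideal.mem_span_singleton, Ideal.mem_comap, Subring.subtype_apply,
      dvd_iff_coe_dvd hP]
  rw [heq]
  infer_instance

def xPowIdeal (A : Submodule K L) (m : ℕ) : Ideal D where
  carrier := {f | ∃ g : L[X], g.coeff 0 ∈ A ∧ (f : L[X]) = X ^ m * g}
  zero_mem' := ⟨0, by simp⟩
  add_mem' := by
    rintro f f' ⟨g, hg, hf⟩ ⟨g', hg', hf'⟩
    exact ⟨g + g', by simpa using A.add_mem hg hg', by simp [hf, hf', mul_add]⟩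
  smul_mem' := by
    rintro r f ⟨g, hg, hf⟩
    obtain ⟨k, hk⟩ := mem_iff.mp r.2
    refine ⟨r * g, ?_, by simp [hf, mul_left_comm]⟩
    rw [mul_coeff_zero, ← hk, ← Algebra.smul_def]
    exact A.smul_mem k hg

theorem coeff_zero_eq_zero_of_mem_xPowIdeal {A : Submodule K L} {m : ℕ} (hm : m ≠ 0) {f : D}
    (hf : f ∈ xPowIdeal A m) : (f : L[X]).coeff 0 = 0 := by
  obtain ⟨g, -, hfg⟩ := hf
  simp [hfg, Ne.symm hm]

theorem xPowIdeal_ne_top (A : Submodule K L) {m : ℕ} (hm : m ≠ 0) : xPowIdeal A m ≠ ⊤ := by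
  intro h
  simpa using coeff_zero_eq_zero_of_mem_xPowIdeal hm (h ▸ Submodule.mem_top : (1 : D) ∈ _)

theorem mul_mem_xPowIdeal_one {A : Submodule K L} {x y : D} (hx : (x : L[X]).coeff 0 = 0)
    (hy : (y : L[X]).coeff 0 = 0) : x * y ∈ xPowIdeal A 1 := by
  obtain ⟨x', hx'⟩ := X_dvd_iff.mpr hx
  obtain ⟨y', hy'⟩ := X_dvd_iff.mpr hy
  exact ⟨X * x' * y', by simp [A.zero_mem], by simp [hx', hy']; ring⟩

theorem mem_xPowIdeal_one_of_mul_mem {A : Submodule K L} {x c : D}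
    (hx : (x : L[X]).coeff 0 = 0) (hc : (c : L[X]).coeff 0 ≠ 0) (h : x * c ∈ xPowIdeal A 1) :
    x ∈ xPowIdeal A 1 := by
  obtain ⟨x', hx'⟩ := X_dvd_iff.mpr hx
  obtain ⟨g, hg, hxc⟩ := h
  rw [Subring.coe_mul, hx', pow_one, mul_assoc] at hxc
  obtain rfl := mul_left_cancel₀ X_ne_zero hxc
  obtain ⟨k, hk⟩ := mem_iff.mp c.2
  have hk0 : k ≠ 0 := by rintro rfl; exact hc (by simpa using hk.symm)
  rw [mul_coeff_zero, ← hk, mul_comm, ← Algebra.smul_def, A.smul_mem_iff hk0] at hg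
  exact ⟨x', hg, by rw [hx', pow_one]⟩

theorem isTwoAbsorbing_xPowIdeal_one (A : Submodule K L) : IsTwoAbsorbing (xPowIdeal A 1) := by
  intro a b c habc
  have h0 := coeff_zero_eq_zero_of_mem_xPowIdeal one_ne_zero habc
  simp only [Subring.coe_mul, mul_coeff_zero] at h0
  by_cases hc : (c : L[X]).coeff 0 = 0
  · by_cases hb : (b : L[X]).coeff 0 = 0
    · exact Or.inr (Or.inr (mul_mem_xPowIdeal_one hb hc))
    · refine Or.inr (Or.inl (mem_xPowIdeal_one_of_mul_mem ?_ hb (by rwa [mul_right_comm])))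
      simp [mul_coeff_zero, hc]
  · refine Or.inl (mem_xPowIdeal_one_of_mul_mem ?_ hc habc)
    simpa [mul_coeff_zero, hc] using h0

theorem xPowIdeal_one_one_mul (A : Submodule K L) {m : ℕ} (hm : m ≠ 0) :
    xPowIdeal 1 1 * xPowIdeal A m = xPowIdeal A (m + 1) := by
  refine le_antisymm (Ideal.mul_le.mpr ?_) fun f ⟨g, hg, hf⟩ => ?_
  · rintro r ⟨r', hr', hr⟩ s ⟨s', hs', hs⟩
    obtain ⟨k, hk⟩ := Submodule.mem_one.mp hr'
    refine ⟨r' * s', ?_, by simp [hr, hs]; ring⟩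
    rw [mul_coeff_zero, ← hk, ← Algebra.smul_def]
    exact A.smul_mem k hs'
  · have hXg : X ^ m * g ∈ D := by
      obtain ⟨n, rfl⟩ := Nat.exists_eq_succ_of_ne_zero hm
      simp
    have hX : (X : L[X]) ∈ D := by simp
    have hf' : f = ⟨X, hX⟩ * ⟨X ^ m * g, hXg⟩ :=
      Subtype.ext (by simp [hf, pow_succ', mul_assoc])
    rw [hf']
    exact Ideal.mul_mem_mul ⟨1, by simp, by simp⟩ ⟨g, hg, rfl⟩

theorem xPowIdeal_mem_twoAbsorbingProducts (A : Submodule K L) {m : ℕ} (hm : m ≠ 0) :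
    xPowIdeal A m ∈ twoAbsorbingProducts D := by
  induction m with
  | zero => exact absurd rfl hm
  | succ n ih =>
    rcases eq_or_ne n 0 with rfl | hn
    · exact Submonoid.subset_closure
        ⟨xPowIdeal_ne_top A one_ne_zero, isTwoAbsorbing_xPowIdeal_one A⟩
    · rw [← xPowIdeal_one_one_mul A hn]
      exact mul_mem (Submonoid.subset_closure
        ⟨xPowIdeal_ne_top 1 one_ne_zero, isTwoAbsorbing_xPowIdeal_one 1⟩) (ih hn)

theorem exists_mem_coe_eq_X_mul {I : Ideal D} {g : L[X]} (hg : g ∈ I.map (kPlusXL K L).subtype) :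
    ∃ i ∈ I, (i : L[X]) = X * g := by
  -- `X * w ∈ D` for every `w`, which makes the generalised claim stable under `L[X]`-multiples.
  suffices ∀ w : L[X], ∃ i ∈ I, (i : L[X]) = X * w * g by simpa using this 1
  induction hg using Submodule.span_induction with
  | mem x hx =>
    obtain ⟨i, hi, rfl⟩ := hx
    exact fun w => ⟨⟨X * w, X_mul_mem w⟩ * i, I.mul_mem_left _ hi, by simp⟩
  | zero => exact fun w => ⟨0, I.zero_mem, by simp⟩
  | add x y _ _ ihx ihy =>
    intro w
    obtain ⟨i, hi, hie⟩ := ihx w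
    obtain ⟨j, hj, hje⟩ := ihy w
    exact ⟨i + j, I.add_mem hi hj, by simp [hie, hje, mul_add]⟩
  | smul a x _ ihx =>
    intro w
    obtain ⟨i, hi, hie⟩ := ihx (w * a)
    exact ⟨i, hi, by rw [hie, smul_eq_mul]; ring⟩

def coeffSubmodule (I : Ideal D) (m : ℕ) : Submodule K L where
  carrier := {a | ∃ i ∈ I, (i : L[X]) = C a * X ^ m}
  zero_mem' := ⟨0, I.zero_mem, by simp⟩
  add_mem' := by
    rintro a b ⟨i, hi, hie⟩ ⟨j, hj, hje⟩
    exact ⟨i + j, I.add_mem hi hj, by simp [hie, hje, add_mul]⟩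
  smul_mem' := by
    rintro k a ⟨i, hi, hie⟩
    refine ⟨⟨C (algebraMap K L k), mem_iff.mpr ⟨k, by simp⟩⟩ * i,
      I.mul_mem_left _ hi, ?_⟩
    simp [hie, Algebra.smul_def, mul_assoc]

theorem eq_xPowIdeal_of_map_eq {I : Ideal D} {m : ℕ}
    (hI : I.map (kPlusXL K L).subtype = Ideal.span {X ^ m}) :
    I = xPowIdeal (coeffSubmodule I m) m := by
  have hX : ∀ g : L[X], ∃ i ∈ I, (i : L[X]) = X ^ (m + 1) * g := fun g => by
    obtain ⟨i, hi, he⟩ := exists_mem_coe_eq_X_mul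
      (hI ▸ Ideal.mem_span_singleton.mpr (dvd_mul_right _ g) : X ^ m * g ∈ _)
    exact ⟨i, hi, by rw [he]; ring⟩
  have hsplit (g : L[X]) : X ^ m * g = C (g.coeff 0) * X ^ m + X ^ (m + 1) * divX g := by
    conv_lhs => rw [← X_mul_divX_add g]
    ring
  ext f
  constructor
  · intro hf
    obtain ⟨g, hg⟩ := Ideal.mem_span_singleton.mp
      (hI ▸ Ideal.mem_map_of_mem _ hf : (f : L[X]) ∈ Ideal.span {X ^ m})
    obtain ⟨i, hi, he⟩ := hX (divX g)
    refine ⟨g, ⟨f - i, I.sub_mem hf hi, ?_⟩, hg⟩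
    rw [AddSubgroupClass.coe_sub, hg, he, hsplit]
    ring
  · rintro ⟨g, ⟨i₀, hi₀, he₀⟩, hg⟩
    obtain ⟨i, hi, he⟩ := hX (divX g)
    convert I.add_mem hi₀ hi
    exact Subtype.ext (by rw [Subring.coe_add, hg, he₀, he, hsplit])

theorem ne_zero_of_map_eq_span_X_pow {I : Ideal D} (hI : I ≠ ⊤) {m : ℕ}
    (h : I.map (kPlusXL K L).subtype = Ideal.span {X ^ m}) : m ≠ 0 := by
  rintro rfl
  rw [pow_zero, Ideal.span_singleton_one] at h
  by_cases hall : ∀ f ∈ I, (f : L[X]).coeff 0 = 0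
  · have hle : I.map (kPlusXL K L).subtype ≤ Ideal.span {X} :=
      Ideal.map_le_iff_le_comap.mpr fun f hf =>
        Ideal.mem_span_singleton.mpr (X_dvd_iff.mpr (hall f hf))
    rw [h, top_le_iff, Ideal.span_singleton_eq_top] at hle
    exact not_isUnit_X hle
  · push Not at hall
    obtain ⟨f, hf, hf0⟩ := hall
    obtain ⟨i, hi, he⟩ :=
      exists_mem_coe_eq_X_mul (h ▸ Submodule.mem_top : divX (f : L[X]) ∈ _)
    refine hI (I.eq_top_of_isUnit_mem (I.sub_mem hf hi) (isUnit_of_coe_eq_C ?_ hf0))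
    rw [AddSubgroupClass.coe_sub, he]
    linear_combination -X_mul_divX_add (f : L[X])

theorem mem_twoAbsorbingProducts_of_mem {I : Ideal D} {f : D} (hf : f ∈ I) (hf0 : f ≠ 0) :
    I ∈ twoAbsorbingProducts D := by
  induction hn : (f : L[X]).natDegree using Nat.strong_induction_on generalizing I f with
  | _ n ih =>
  rcases eq_or_ne I ⊤ with rfl | hI
  · exact Ideal.one_eq_top (R := D) ▸ one_mem _
  obtain ⟨h, hIh⟩ : ∃ h, I.map (kPlusXL K L).subtype = Ideal.span {h} :=
    (IsPrincipalIdealRing.principal _).principal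
  have hfh : h ∣ f := Ideal.mem_span_singleton.mp (hIh ▸ Ideal.mem_map_of_mem _ hf)
  have hh0 : h ≠ 0 := by rintro rfl; exact hf0 (Subtype.ext (zero_dvd_iff.mp hfh))
  rcases exists_irreducible_dvd_or_associated_X_pow hh0 with ⟨p, hp, hp0, hph⟩ | ⟨m, hm⟩
  · let P : D := ⟨p, mem_iff.mpr ⟨1, by rw [map_one, hp0]⟩⟩
    have hle : I ≤ Ideal.span {P} := fun g hg => Ideal.mem_span_singleton.mpr <|
      (dvd_iff_coe_dvd hp0).mpr <| hph.trans <| Ideal.mem_span_singleton.mp <|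
        hIh ▸ Ideal.mem_map_of_mem _ hg
    obtain ⟨g, rfl⟩ := Ideal.mem_span_singleton.mp (hle hf)
    have hg0 : g ≠ 0 := right_ne_zero_of_mul hf0
    have hdeg : (g : L[X]).natDegree < n := by
      rw [← hn, Subring.coe_mul, natDegree_mul hp.ne_zero (by exact_mod_cast hg0)]
      have := natDegree_pos_iff_degree_pos.mpr (degree_pos_of_irreducible hp)
      omega
    rw [Ideal.eq_span_singleton_mul_colon hle]
    have hP := isPrime_span_singleton (P := P) hp0 hp
    exact mul_mem (Submonoid.subset_closure ⟨hP.ne_top, hP.isTwoAbsorbing⟩)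
      (ih _ hdeg (Ideal.mem_colon_span_singleton.mpr (by rwa [mul_comm])) hg0 rfl)
  · rw [Ideal.span_singleton_eq_span_singleton.mpr hm] at hIh
    rw [eq_xPowIdeal_of_map_eq hIh]
    exact xPowIdeal_mem_twoAbsorbingProducts _ (ne_zero_of_map_eq_span_X_pow hI hIh)

theorem mem_twoAbsorbingProducts (I : Ideal D) : I ∈ twoAbsorbingProducts D := by
  rcases eq_or_ne I ⊥ with rfl | hI
  · exact Submonoid.subset_closure ⟨bot_ne_top, Ideal.isPrime_bot.isTwoAbsorbing⟩
  obtain ⟨f, hf, hf0⟩ := Submodule.exists_mem_ne_zero_of_ne_bot hI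
  exact mem_twoAbsorbingProducts_of_mem hf hf0

end kPlusXL

theorem K_plus_XLX_is_TAF {K L : Type*} [Field K] [Field L] [Algebra K L] :
    IsTAFRing (Subring.comap (Polynomial.constantCoeff : Polynomial L →+* L)
      (algebraMap K L).range) :=
  isTAFRing_of_forall_mem_twoAbsorbingProducts kPlusXL.mem_twoAbsorbingProducts
end
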